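/- arXiv:1902.01311 — 4 statements merged into one kernel-verified Lean document; each statement's English description precedes it below -/
import Mathlib

section
/- Let k ≥ r ≥ 1 be integers and let M = (m_{ij}) be a k×r real matrix. Let V = ℂ², let z, w be the two coordinate functionals on ℂ², and let ω = z∧w be the alternating bilinear form ω(u,v) = z(u)w(v) − w(u)z(v) on V. Then, in the exterior algebra of the dual space of V^r = (ℂ²)^r, the r-th power of the 2-form i_M^*ω_k (the pullback of ω_k along i_M, viewed as an element of degree 2 of the exterior algebra of the dual of V^r) equals r!·det(MᵀM)·(z₁∧w₁∧z₂∧w₂∧⋯∧z_r∧w_r), where z_j, w_j denote the pullbacks of z, w under the j-th projection V^r → V, and MᵀM is the Gram matrix of the columns of M. -/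
/-!
With `G = MᵀM`, bilinearity gives `i_M^*ω_k = Σ_j z_j ∧ y_j` where `y_j = Σ_l G_{jl} w_l`.
The summands `z_j ∧ y_j` have even degree, so they commute, and each squares to zero; hence the
`r`-th power of their sum is `r!` times their product. That product is alternating in
`(y_1, …, y_r)`, so the substitution `y = G w` contributes the factor `det G`.
-/

open scoped BigOperators

noncomputable section

/-- The coordinate functional `z_j` on `(ℂ²)^r` (the `z`-coordinate of the `j`-th factor). -/
def zCoord (r : ℕ) (j : Fin r) : Module.Dual ℂ (Fin r → Fin 2 → ℂ) :=
  ((LinearMap.proj (0 : Fin 2) : (Fin 2 → ℂ) →ₗ[ℂ] ℂ)).comp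
    (LinearMap.proj j : (Fin r → Fin 2 → ℂ) →ₗ[ℂ] (Fin 2 → ℂ))

/-- The coordinate functional `w_j` on `(ℂ²)^r` (the `w`-coordinate of the `j`-th factor). -/
def wCoord (r : ℕ) (j : Fin r) : Module.Dual ℂ (Fin r → Fin 2 → ℂ) :=
  ((LinearMap.proj (1 : Fin 2) : (Fin 2 → ℂ) →ₗ[ℂ] ℂ)).comp
    (LinearMap.proj j : (Fin r → Fin 2 → ℂ) →ₗ[ℂ] (Fin 2 → ℂ))

/-- The linear map `i_M : (ℂ²)^r → (ℂ²)^k`,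
`(v_1,…,v_r) ↦ (Σ_j m_{1j} v_j, …, Σ_j m_{kj} v_j)`, for a real `k × r` matrix `M`. -/
def iM (k r : ℕ) (M : Matrix (Fin k) (Fin r) ℝ) :
    (Fin r → Fin 2 → ℂ) →ₗ[ℂ] (Fin k → Fin 2 → ℂ) :=
  LinearMap.pi fun i : Fin k =>
    ∑ j : Fin r, ((M i j : ℂ)) • (LinearMap.proj j : (Fin r → Fin 2 → ℂ) →ₗ[ℂ] (Fin 2 → ℂ))

open scoped Matrix

section SquareZero

variable {A : Type*} [Semiring A] {x y : A}

theorem Commute.add_pow_succ_of_mul_self_eq_zero (h : Commute x y) (hx : x * x = 0) (n : ℕ) :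
    (x + y) ^ (n + 1) = y ^ (n + 1) + (n + 1) • (x * y ^ n) := by
  have hpow : ∀ m, x ^ (m + 2) = 0 := fun m => by rw [pow_add, sq, hx, mul_zero]
  rw [h.add_pow, Finset.sum_range_succ', Finset.sum_range_succ', Finset.sum_eq_zero]
  · simp only [pow_zero, pow_one, one_mul, zero_add, Nat.choose_zero_right, Nat.choose_one_right,
      Nat.cast_one, mul_one, Nat.sub_zero, Nat.add_sub_cancel, ← Nat.cast_comm, nsmul_eq_mul]
    rw [add_comm]
  · intro m _
    rw [hpow, zero_mul, zero_mul]

variable {n : ℕ} {c : Fin n → A}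

theorem Fin.sum_pow_succ_eq_zero_of_mul_self_eq_zero (hc : ∀ i j, Commute (c i) (c j))
    (hsq : ∀ i, c i * c i = 0) : (∑ i, c i) ^ (n + 1) = 0 := by
  induction n with
  | zero => simp
  | succ n ih =>
    have hcomm : Commute (c 0) (∑ i : Fin n, c i.succ) := .sum_right _ _ _ fun _ _ => hc _ _
    rw [Fin.sum_univ_succ, hcomm.add_pow_succ_of_mul_self_eq_zero (hsq 0), pow_succ,
      ih (fun _ _ => hc _ _) (fun _ => hsq _)]
    simp

theorem Fin.sum_pow_eq_factorial_smul_prod_ofFn (hc : ∀ i j, Commute (c i) (c j))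
    (hsq : ∀ i, c i * c i = 0) : (∑ i, c i) ^ n = n.factorial • (List.ofFn c).prod := by
  induction n with
  | zero => simp
  | succ n ih =>
    have hcomm : Commute (c 0) (∑ i : Fin n, c i.succ) := .sum_right _ _ _ fun _ _ => hc _ _
    rw [Fin.sum_univ_succ, hcomm.add_pow_succ_of_mul_self_eq_zero (hsq 0),
      Fin.sum_pow_succ_eq_zero_of_mul_self_eq_zero (fun _ _ => hc _ _) (fun _ => hsq _),
      ih (fun _ _ => hc _ _) (fun _ => hsq _), List.ofFn_succ, List.prod_cons, zero_add,
      Nat.factorial_succ, mul_smul, mul_smul_comm]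

end SquareZero

section AlternatingMap

variable {R M N ι : Type*} [CommRing R] [AddCommGroup M] [Module R M] [AddCommGroup N] [Module R N]
  [Fintype ι] [DecidableEq ι]

theorem AlternatingMap.eq_basis_det_smulRight (e : Module.Basis ι R M) (f : M [⋀^ι]→ₗ[R] N) :
    f = e.det.smulRight (f e) := by
  refine e.ext_alternating fun i hi => ?_
  let σ : Equiv.Perm ι := Equiv.ofBijective i (Finite.injective_iff_bijective.1 hi)
  change f (e ∘ σ) = e.det.smulRight (f e) (e ∘ σ)
  simp [AlternatingMap.map_perm, Module.Basis.det_self]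

theorem AlternatingMap.map_sum_smul_eq_det_smul (f : M [⋀^ι]→ₗ[R] N) (A : Matrix ι ι R)
    (v : ι → M) : f (fun i => ∑ j, A i j • v j) = A.det • f v := by
  have h := congr($((f.compLinearMap (Fintype.linearCombination R v)).eq_basis_det_smulRight
    (Pi.basisFun R ι)) fun i => A i)
  rw [AlternatingMap.compLinearMap_apply, AlternatingMap.smulRight_apply, Pi.basisFun_det_apply,
    AlternatingMap.compLinearMap_apply] at h
  simp only [Fintype.linearCombination_apply, Pi.basisFun_apply, Pi.single_apply, ite_smul,
    one_smul, zero_smul, Finset.sum_ite_eq', Finset.mem_univ, if_true] at h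
  exact h

end AlternatingMap

namespace ExteriorAlgebra

variable {R M : Type*} [CommRing R] [AddCommGroup M] [Module R M]

theorem ι_mul_ι_comm (x y : M) : ι R x * ι R y = -(ι R y * ι R x) :=
  eq_neg_of_add_eq_zero_left (ι_add_mul_swap x y)

theorem commute_ι_mul_ι_ι (a b c : M) : Commute (ι R a * ι R b) (ι R c) := by
  show ι R a * ι R b * ι R c = ι R c * (ι R a * ι R b)
  rw [mul_assoc, ι_mul_ι_comm b c, mul_neg, ← mul_assoc, ι_mul_ι_comm a c, neg_mul, neg_neg,
    mul_assoc]

theorem commute_ι_mul_ι (a b c d : M) : Commute (ι R a * ι R b) (ι R c * ι R d) :=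
  (commute_ι_mul_ι_ι a b c).mul_right (commute_ι_mul_ι_ι a b d)

theorem ι_mul_ι_mul_ι_mul_ι_self (a b c : M) : ι R a * ι R b * (ι R c * ι R b) = 0 := by
  rw [mul_assoc, ← mul_assoc (ι R b), ι_mul_ι_comm b c, neg_mul, mul_neg, mul_assoc (ι R c),
    ι_sq_zero, mul_zero, mul_zero, neg_zero]

def ιPairMulti {n : ℕ} (u : Fin n → M) : M [⋀^Fin n]→ₗ[R] ExteriorAlgebra R M :=
  { (MultilinearMap.mkPiAlgebraFin R n (ExteriorAlgebra R M)).compLinearMap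
      fun j => LinearMap.mulLeft R (ι R (u j)) ∘ₗ ι R with
    map_eq_zero_of_eq' := by
      intro v i j hv hij
      have hperm : (List.finRange n).Perm (i :: j :: ((List.finRange n).erase i).erase j) :=
        (List.perm_cons_erase (List.mem_finRange i)).trans <| .cons i <|
          List.perm_cons_erase <| (List.mem_erase_of_ne hij.symm).mpr (List.mem_finRange j)
      have hcomm : ((List.finRange n).map fun l => ι R (u l) * ι R (v l)).Pairwise Commute :=
        List.pairwise_map.mpr <| (List.nodup_finRange n).imp fun _ => commute_ι_mul_ι _ _ _ _
      change (List.ofFn fun l => ι R (u l) * ι R (v l)).prod = 0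
      rw [List.ofFn_eq_map, (hperm.map _).prod_eq' hcomm, List.map_cons, List.map_cons,
        List.prod_cons, List.prod_cons, hv, ← mul_assoc, ι_mul_ι_mul_ι_mul_ι_self, zero_mul] }

theorem ιPairMulti_apply {n : ℕ} (u v : Fin n → M) :
    ιPairMulti u v = (List.ofFn fun j => ι R (u j) * ι R (v j)).prod := by
  simp [ιPairMulti]

end ExteriorAlgebra

open ExteriorAlgebra

theorem LinearMap.sum_apply_sum_smul_sum_smul {R M N κ ι : Type*} [CommSemiring R]
    [AddCommMonoid M] [Module R M] [AddCommMonoid N] [Module R N] [Fintype κ] [Fintype ι]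
    (B : M →ₗ[R] M →ₗ[R] N) (A : Matrix κ ι R) (u v : ι → M) :
    ∑ k, B (∑ j, A k j • u j) (∑ l, A k l • v l) = ∑ j, B (u j) (∑ l, (Aᵀ * A) j l • v l) := by
  simp only [map_sum, map_smul, LinearMap.sum_apply, LinearMap.smul_apply, Finset.smul_sum,
    smul_smul, Matrix.mul_apply, Matrix.transpose_apply, Finset.sum_smul]
  rw [← Finset.sum_comm_cycle, Finset.sum_comm]
  simp only [mul_comm]

theorem zCoord_comp_iM (k r : ℕ) (M : Matrix (Fin k) (Fin r) ℝ) (i : Fin k) :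
    (zCoord k i).comp (iM k r M) = ∑ j, (M i j : ℂ) • zCoord r j := by
  ext v
  simp [zCoord, iM]

theorem wCoord_comp_iM (k r : ℕ) (M : Matrix (Fin k) (Fin r) ℝ) (i : Fin k) :
    (wCoord k i).comp (iM k r M) = ∑ j, (M i j : ℂ) • wCoord r j := by
  ext v
  simp [wCoord, iM]

theorem pullback_form_pow_eq_factorial_gram_det_general
    (k r : ℕ) (M : Matrix (Fin k) (Fin r) ℝ) :
    (∑ i : Fin k,
        ExteriorAlgebra.ι ℂ ((zCoord k i).comp (iM k r M)) *
          ExteriorAlgebra.ι ℂ ((wCoord k i).comp (iM k r M))) ^ r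
      = ((((r.factorial : ℝ) * (Matrix.transpose M * M).det : ℝ) : ℂ)) •
        ((List.finRange r).map fun j =>
          ExteriorAlgebra.ι ℂ (zCoord r j) * ExteriorAlgebra.ι ℂ (wCoord r j)).prod := by
  set G : Matrix (Fin r) (Fin r) ℂ := (Matrix.transpose M * M).map Complex.ofRealHom
  have hG : (M.map Complex.ofRealHom)ᵀ * M.map Complex.ofRealHom = G := by
    rw [← Matrix.transpose_map, ← Matrix.map_mul]
  have hdet : G.det = (Matrix.transpose M * M).det := (RingHom.map_det _ _).symm
  have hform : ∑ i, ι ℂ ((zCoord k i).comp (iM k r M)) * ι ℂ ((wCoord k i).comp (iM k r M)) =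
      ∑ j, ι ℂ (zCoord r j) * ι ℂ (∑ l, G j l • wCoord r l) := by
    simpa only [zCoord_comp_iM, wCoord_comp_iM, hG, LinearMap.compl₁₂_apply, LinearMap.mul_apply',
      Matrix.map_apply, Complex.ofRealHom_eq_coe] using
      ((LinearMap.mul ℂ _).compl₁₂ (ι ℂ) (ι ℂ)).sum_apply_sum_smul_sum_smul
        (M.map Complex.ofRealHom) (zCoord r) (wCoord r)
  rw [hform, Fin.sum_pow_eq_factorial_smul_prod_ofFn (fun _ _ => commute_ι_mul_ι _ _ _ _)
    (fun _ => ι_mul_ι_mul_ι_mul_ι_self _ _ _), ← ιPairMulti_apply,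
    AlternatingMap.map_sum_smul_eq_det_smul, ιPairMulti_apply, hdet, List.ofFn_eq_map,
    ← Nat.cast_smul_eq_nsmul ℂ, smul_smul]
  norm_cast

/-- For `k ≥ r ≥ 1` and a real `k × r` matrix `M`, in the exterior algebra of
the dual of `V^r` with `V = ℂ²` and `ω = z ∧ w`, the `r`-th power of the degree-2 element
`i_M^*ω_k = Σ_{i=1}^k (z_i ∘ i_M) ∧ (w_i ∘ i_M)` equals
`r! · det(MᵀM) · z_1 ∧ w_1 ∧ ⋯ ∧ z_r ∧ w_r`. -/
theorem pullback_form_pow_eq_factorial_gram_det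
    (k r : ℕ) (hr : 1 ≤ r) (hkr : r ≤ k) (M : Matrix (Fin k) (Fin r) ℝ) :
    (∑ i : Fin k,
        ExteriorAlgebra.ι ℂ ((zCoord k i).comp (iM k r M)) *
          ExteriorAlgebra.ι ℂ ((wCoord k i).comp (iM k r M))) ^ r
      = ((((r.factorial : ℝ) * (Matrix.transpose M * M).det : ℝ) : ℂ)) •
        ((List.finRange r).map fun j =>
          ExteriorAlgebra.ι ℂ (zCoord r j) * ExteriorAlgebra.ι ℂ (wCoord r j)).prod :=
  pullback_form_pow_eq_factorial_gram_det_general k r M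

end
end

section
/- Let V be a finite-dimensional complex vector space, ω a nonzero alternating bilinear form on V, k ≥ r ≥ 1 integers, and M a k×r integer matrix of rank r. Then the 2r-linear alternating form (i_M^*ω_k)^{∧r} on V^r is nonzero; that is, there exist vectors u_1,…,u_{2r} ∈ V^r with (i_M^*ω_k)^{∧r}(u_1,…,u_{2r}) ≠ 0. In particular, when dim V = 2, the 2-form i_M^*ω_k is a nondegenerate (symplectic) form on V^r. -/
open scoped BigOperators

/-- The `l`-fold wedge power of a bilinear form `β`, as an explicit `2l`-linear
expression: `β^{∧l}(u_1,…,u_{2l}) = Σ_{σ ∈ S_{2l}} sgn(σ) ∏_{i=1}^{l} β(u_{σ(2i−1)}, u_{σ(2i)})`. -/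
noncomputable def wedgePow {T : Type*} (β : T → T → ℂ) (l : ℕ) (u : Fin (2 * l) → T) : ℂ :=
  ∑ σ : Equiv.Perm (Fin (2 * l)), ((Equiv.Perm.sign σ : ℤ) : ℂ) *
    ∏ i : Fin l, β (u (σ ⟨2 * i.1, by have := i.2; omega⟩))
      (u (σ ⟨2 * i.1 + 1, by have := i.2; omega⟩))

/-- The pullback `i_M^*ω_k` of the form `ω_k` on `V^k` along the linear map
`i_M : V^r → V^k`, `(v_1,…,v_r) ↦ (Σ_j m_{1j} v_j, …, Σ_j m_{kj} v_j)`,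
for an integer matrix `M`. -/
noncomputable def pullbackFormZ {V : Type*} [AddCommGroup V] [Module ℂ V]
    (ω : V →ₗ[ℂ] V →ₗ[ℂ] ℂ) {k r : ℕ} (M : Matrix (Fin k) (Fin r) ℤ)
    (x y : Fin r → V) : ℂ :=
  ∑ i : Fin k, ω (∑ j : Fin r, (M i j : ℂ) • x j) (∑ j : Fin r, (M i j : ℂ) • y j)

open Matrix Equiv Equiv.Perm

section Aux

lemma det_aux {k r : ℕ} (M : Matrix (Fin k) (Fin r) ℤ) (hrank : M.rank = r) :
    (Mᵀ * M).det ≠ 0 := by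
  have hinj : ∀ v : Fin r → ℤ, M.mulVec v = 0 → v = 0 := by
    intro v hv
    have hker : Module.rank ℤ ↥(LinearMap.ker M.mulVecLin) = 0 := by
      have h1 := LinearMap.rank_range_add_rank_ker M.mulVecLin
      have h2 : Module.rank ℤ (Fin r → ℤ) = r := by simp
      have h3 : Module.rank ℤ ↥(LinearMap.range M.mulVecLin) = r := by
        rw [← Module.finrank_eq_rank]
        exact_mod_cast congrArg Nat.cast hrank
      rw [h2, h3] at h1
      refine Cardinal.eq_of_add_eq_add_left ?_ (Cardinal.nat_lt_aleph0 r)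
      rw [h1, add_zero]
    rw [rank_eq_zero_iff] at hker
    obtain ⟨a, ha, hav⟩ := hker ⟨v, hv⟩
    have : a • v = 0 := congrArg Subtype.val hav
    exact smul_eq_zero.mp this |>.resolve_left ha
  intro hdet
  obtain ⟨v, hv0, hv⟩ := Matrix.exists_mulVec_eq_zero_iff.mpr hdet
  have hdot : dotProduct (M.mulVec v) (M.mulVec v) = 0 := by
    have : dotProduct v ((Mᵀ * M).mulVec v) = 0 := by rw [hv]; simp
    rwa [← Matrix.mulVec_mulVec, Matrix.dotProduct_mulVec, Matrix.vecMul_transpose] at this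
  have hMv : M.mulVec v = 0 := by
    funext i
    have hnn : ∀ j ∈ Finset.univ, 0 ≤ M.mulVec v j * M.mulVec v j := fun j _ => mul_self_nonneg _
    have := (Finset.sum_eq_zero_iff_of_nonneg hnn).mp hdot i (Finset.mem_univ i)
    exact mul_self_eq_zero.mp this
  exact hv0 (hinj v hMv)

/-- standard symplectic "Gram matrix" on `Fin l × Bool`. -/
def Jb (l : ℕ) (p q : Fin l × Bool) : ℂ :=
  if p.1 = q.1 then
    (if p.2 = false ∧ q.2 = true then 1 else if p.2 = true ∧ q.2 = false then -1 else 0)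
  else 0

lemma key_term (l : ℕ) (π : Perm (Fin l × Bool)) :
    ((Equiv.Perm.sign π : ℤ) : ℂ) * ∏ i : Fin l, Jb l (π (i, false)) (π (i, true)) = 0 ∨
    ((Equiv.Perm.sign π : ℤ) : ℂ) * ∏ i : Fin l, Jb l (π (i, false)) (π (i, true)) = 1 := by
  by_cases hz : ∀ i : Fin l, (π (i, false)).1 = (π (i, true)).1 ∧
      (π (i, true)).2 = !(π (i, false)).2
  · right
    set τ : Fin l → Fin l := fun i => (π (i, false)).1 with hτ
    set ε : Fin l → Bool := fun i => (π (i, false)).2 with hε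
    have hπ : ∀ i b, π (i, b) = (τ i, xor b (ε i)) := by
      intro i b
      cases b
      · simp [τ, ε]
      · obtain ⟨h1, h2⟩ := hz i
        refine Prod.ext ?_ ?_
        · simpa [τ] using h1.symm
        · simpa [ε] using h2
    have hτinj : Function.Injective τ := by
      intro i j hij
      by_contra hne
      have hkey : π (i, xor (ε j) (ε i)) = π (j, false) := by
        rw [hπ, hπ]
        refine Prod.ext ?_ ?_
        · exact hij
        · cases hεi : ε i <;> cases hεj : ε j <;> rfl
      have h2 := π.injective hkey
      exact hne (congrArg Prod.fst h2)
    have hτbij : Function.Bijective τ := (Finite.injective_iff_bijective).1 hτinj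
    let τe : Perm (Fin l) := Equiv.ofBijective τ hτbij
    let ρ : Perm (Fin l × Bool) :=
      Equiv.prodCongrRight (fun i => if ε i = true then Equiv.swap false true else Equiv.refl Bool)
    have hπeq : π = (Equiv.prodCongrLeft (fun _ : Bool => τe)) * ρ := by
      apply Equiv.ext
      rintro ⟨i, b⟩
      have hr : ((Equiv.prodCongrLeft (fun _ : Bool => τe)) * ρ) (i, b) = (τ i, xor b (ε i)) := by
        simp only [Equiv.Perm.mul_apply]
        rcases Bool.eq_false_or_eq_true (ε i) with h | h <;> cases b <;>
          simp [ρ, τe, Equiv.prodCongrRight, Equiv.prodCongrLeft, h, Equiv.swap_apply_def]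
      rw [hr, hπ]
    have hsign : Equiv.Perm.sign π = ∏ i : Fin l, (if ε i = true then (-1 : ℤˣ) else 1) := by
      rw [hπeq, _root_.map_mul]
      have h1 : Equiv.Perm.sign (Equiv.prodCongrLeft (fun _ : Bool => τe)) = 1 := by
        rw [Equiv.Perm.sign_prodCongrLeft]
        simp [Int.units_sq]
      have h2 : Equiv.Perm.sign ρ = ∏ i : Fin l, (if ε i = true then (-1 : ℤˣ) else 1) := by
        rw [Equiv.Perm.sign_prodCongrRight]
        refine Finset.prod_congr rfl fun i _ => ?_
        rcases Bool.eq_false_or_eq_true (ε i) with h | h <;> simp [h]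
      rw [h1, h2, one_mul]
    have hprod : ∀ i : Fin l, Jb l (π (i, false)) (π (i, true))
        = (if ε i = true then (-1 : ℂ) else 1) := by
      intro i
      rw [hπ i false, hπ i true]
      rcases Bool.eq_false_or_eq_true (ε i) with h | h <;> simp [Jb, h]
    calc ((Equiv.Perm.sign π : ℤ) : ℂ) * ∏ i : Fin l, Jb l (π (i, false)) (π (i, true))
        = (∏ i : Fin l, (if ε i = true then (-1 : ℂ) else 1)) *
          (∏ i : Fin l, (if ε i = true then (-1 : ℂ) else 1)) := by
          have hc1 : ((∏ i : Fin l, (if ε i = true then (-1 : ℤˣ) else 1) : ℤˣ) : ℤ)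
              = ∏ i : Fin l, (if ε i = true then (-1 : ℤ) else 1) := by
            rw [← Units.coeHom_apply, map_prod]
            exact Finset.prod_congr rfl fun i _ => by
              rcases Bool.eq_false_or_eq_true (ε i) with h | h <;> simp [h]
          have hc2 : ((∏ i : Fin l, (if ε i = true then (-1 : ℤ) else 1) : ℤ) : ℂ)
              = ∏ i : Fin l, (if ε i = true then (-1 : ℂ) else 1) := by
            push_cast
            exact Finset.prod_congr rfl fun i _ => by
              rcases Bool.eq_false_or_eq_true (ε i) with h | h <;> simp [h]
          rw [hsign, hc1, hc2]
          congr 1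
          exact Finset.prod_congr rfl fun i _ => hprod i
      _ = ∏ i : Fin l, ((if ε i = true then (-1 : ℂ) else 1) *
            (if ε i = true then (-1 : ℂ) else 1)) := (Finset.prod_mul_distrib).symm
      _ = 1 := by
          refine Finset.prod_eq_one fun i _ => ?_
          rcases Bool.eq_false_or_eq_true (ε i) with h | h <;> simp [h]
  · left
    push_neg at hz
    obtain ⟨i, hi⟩ := hz
    have : Jb l (π (i, false)) (π (i, true)) = 0 := by
      by_cases h1 : (π (i, false)).1 = (π (i, true)).1
      · have h2 := hi h1
        unfold Jb
        rw [if_pos h1]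
        rcases Bool.eq_false_or_eq_true (π (i, false)).2 with h | h <;>
          rcases Bool.eq_false_or_eq_true (π (i, true)).2 with h' | h' <;>
          simp_all
      · simp [Jb, h1]
    rw [Finset.prod_eq_zero (Finset.mem_univ i) this, mul_zero]

lemma key_sum_ne (l : ℕ) :
    (∑ π : Perm (Fin l × Bool),
      ((Equiv.Perm.sign π : ℤ) : ℂ) * ∏ i : Fin l, Jb l (π (i, false)) (π (i, true))) ≠ 0 := by
  have : ∀ π : Perm (Fin l × Bool),
      ((Equiv.Perm.sign π : ℤ) : ℂ) * ∏ i : Fin l, Jb l (π (i, false)) (π (i, true))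
      = if (((Equiv.Perm.sign π : ℤ) : ℂ) *
          ∏ i : Fin l, Jb l (π (i, false)) (π (i, true))) = 1 then 1 else 0 := by
    intro π
    rcases key_term l π with h | h <;> rw [h] <;> simp
  rw [Finset.sum_congr rfl fun π _ => this π, Finset.sum_boole]
  have hone : (((Equiv.Perm.sign (1 : Perm (Fin l × Bool)) : ℤ) : ℂ) *
      ∏ i : Fin l, Jb l ((1 : Perm (Fin l × Bool)) (i, false))
        ((1 : Perm (Fin l × Bool)) (i, true))) = 1 := by
    simp [Jb]
  have hmem : (1 : Perm (Fin l × Bool)) ∈ Finset.univ.filter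
      (fun π : Perm (Fin l × Bool) => (((Equiv.Perm.sign π : ℤ) : ℂ) *
        ∏ i : Fin l, Jb l (π (i, false)) (π (i, true))) = 1) := by
    simp only [Finset.mem_filter, Finset.mem_univ, true_and]
    exact hone
  have hpos : 0 < (Finset.univ.filter
      (fun π : Perm (Fin l × Bool) => (((Equiv.Perm.sign π : ℤ) : ℂ) *
        ∏ i : Fin l, Jb l (π (i, false)) (π (i, true))) = 1)).card :=
    Finset.card_pos.mpr ⟨1, hmem⟩
  exact_mod_cast Nat.cast_ne_zero.mpr hpos.ne'

def pairEquiv (l : ℕ) : Fin l × Bool ≃ Fin (2 * l) where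
  toFun p := ⟨2 * p.1.1 + (if p.2 then 1 else 0), by
    rcases p with ⟨⟨i, hi⟩, b⟩; cases b <;> simp <;> omega⟩
  invFun q := (⟨q.1 / 2, by have := q.2; omega⟩, decide (q.1 % 2 = 1))
  left_inv := by
    rintro ⟨⟨i, hi⟩, b⟩
    cases b <;> simp [Prod.ext_iff, Fin.ext_iff] <;> omega
  right_inv := by
    rintro ⟨q, hq⟩
    simp only [Fin.ext_iff]
    rcases Nat.even_or_odd q with h | h
    · have h2 : q % 2 = 0 := Nat.even_iff.mp h
      simp [h2]
      omega
    · have h2 : q % 2 = 1 := Nat.odd_iff.mp h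
      simp [h2]
      omega

lemma pairEquiv_symm_even (l : ℕ) (i : Fin l) :
    (pairEquiv l).symm ⟨2 * i.1, by have := i.2; omega⟩ = (i, false) := by
  rw [Equiv.symm_apply_eq]
  simp [pairEquiv, Fin.ext_iff]

lemma pairEquiv_symm_odd (l : ℕ) (i : Fin l) :
    (pairEquiv l).symm ⟨2 * i.1 + 1, by have := i.2; omega⟩ = (i, true) := by
  rw [Equiv.symm_apply_eq]
  simp [pairEquiv, Fin.ext_iff]

lemma pairEquiv_apply_false (l : ℕ) (i : Fin l) :
    pairEquiv l (i, false) = ⟨2 * i.1, by have := i.2; omega⟩ := by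
  simp [pairEquiv, Fin.ext_iff]

lemma pairEquiv_apply_true (l : ℕ) (i : Fin l) :
    pairEquiv l (i, true) = ⟨2 * i.1 + 1, by have := i.2; omega⟩ := by
  simp [pairEquiv, Fin.ext_iff]

lemma wedgePow_transport {T : Type*} (β : T → T → ℂ) (l : ℕ) (w : Fin l × Bool → T) :
    wedgePow β l (w ∘ (pairEquiv l).symm) =
      ∑ π : Equiv.Perm (Fin l × Bool), ((Equiv.Perm.sign π : ℤ) : ℂ) *
        ∏ i : Fin l, β (w (π (i, false))) (w (π (i, true))) := by
  rw [wedgePow]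
  refine (Fintype.sum_equiv ((pairEquiv l).permCongr).symm _ _ fun σ => ?_)
  simp only [Equiv.permCongr_symm, Equiv.permCongr_apply, Equiv.symm_symm,
    Equiv.Perm.sign_permCongr, Function.comp_apply, pairEquiv_apply_false, pairEquiv_apply_true]

lemma pull_expand {V : Type*} [AddCommGroup V] [Module ℂ V]
    (ω : V →ₗ[ℂ] V →ₗ[ℂ] ℂ) {k r : ℕ} (M : Matrix (Fin k) (Fin r) ℤ) (x y : Fin r → V) :
    pullbackFormZ ω M x y =
      ∑ j : Fin r, ∑ j' : Fin r, (((Mᵀ * M) j j' : ℤ) : ℂ) * ω (x j) (y j') := by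
  unfold pullbackFormZ
  simp only [map_sum, _root_.map_smul, LinearMap.sum_apply, LinearMap.smul_apply, smul_eq_mul,
    Finset.mul_sum]
  conv_rhs => rw [Finset.sum_comm]
  rw [Finset.sum_comm]
  refine Finset.sum_congr rfl fun j _ => ?_
  rw [Finset.sum_comm]
  refine Finset.sum_congr rfl fun j' _ => ?_
  rw [Matrix.mul_apply]
  push_cast
  rw [Finset.sum_mul]
  refine Finset.sum_congr rfl fun i _ => ?_
  rw [Matrix.transpose_apply]
  ring

end Aux

/-- For a nonzero alternating bilinear form `ω` on a finite-dimensional complex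
vector space `V`, integers `k ≥ r ≥ 1`, and an integer `k × r` matrix `M` of rank `r`, the
alternating `2r`-form `(i_M^*ω_k)^{∧r}` on `V^r` is nonzero; in particular when `dim V = 2`,
the form `i_M^*ω_k` is nondegenerate on `V^r`. -/
theorem pullback_wedgePow_ne_zero
    (V : Type*) [AddCommGroup V] [Module ℂ V] [FiniteDimensional ℂ V]
    (ω : V →ₗ[ℂ] V →ₗ[ℂ] ℂ) (halt : ω.IsAlt) (hω : ω ≠ 0)
    (k r : ℕ) (hr : 1 ≤ r) (hkr : r ≤ k)
    (M : Matrix (Fin k) (Fin r) ℤ) (hrank : M.rank = r) :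
    (∃ u : Fin (2 * r) → (Fin r → V), wedgePow (pullbackFormZ ω M) r u ≠ 0) ∧
    (Module.finrank ℂ V = 2 →
      ∀ x : Fin r → V, (∀ y : Fin r → V, pullbackFormZ ω M x y = 0) → x = 0) := by
  classical
  obtain ⟨a, b, hc⟩ : ∃ a b : V, ω a b ≠ 0 := by
    by_contra h
    push_neg at h
    exact hω (by ext a b; simp [h a b])
  set G : Matrix (Fin r) (Fin r) ℂ := (Mᵀ * M).map (fun z : ℤ => (z : ℂ)) with hGdef
  have hGapp : ∀ p q, G p q = (((Mᵀ * M) p q : ℤ) : ℂ) := fun p q => rfl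
  have hdet0 : (Mᵀ * M).det ≠ 0 := det_aux M hrank
  have hdet : IsUnit G.det := by
    have hmap : G = (Int.castRingHom ℂ).mapMatrix (Mᵀ * M) := rfl
    have hd : G.det = (((Mᵀ * M).det : ℤ) : ℂ) := by
      rw [hmap, ← RingHom.map_det]
      rfl
    rw [hd]
    exact isUnit_iff_ne_zero.mpr (by exact_mod_cast hdet0)
  have hGsymm : Gᵀ = G := by
    rw [hGdef, ← Matrix.transpose_map, Matrix.transpose_mul, Matrix.transpose_transpose]
  have hGinv : G * G⁻¹ = 1 := Matrix.mul_nonsing_inv G hdet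
  have hGinv' : G⁻¹ * G = 1 := Matrix.nonsing_inv_mul G hdet
  have hGinvT : G⁻¹ᵀ = G⁻¹ := by rw [Matrix.transpose_nonsing_inv, hGsymm]
  have hba : ω b a = -(ω a b) := (halt.neg a b).symm
  set w : Fin r × Bool → (Fin r → V) := fun p =>
    if p.2 then (fun q => (G⁻¹ p.1 q) • b) else Pi.single p.1 a with hwdef
  have hsum1 : ∀ i j : Fin r, ∑ q, G i q * G⁻¹ j q = if i = j then 1 else 0 := by
    intro i j
    have h1 : ∑ q, G i q * G⁻¹ j q = (G * G⁻¹ᵀ) i j := by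
      rw [Matrix.mul_apply]
      exact Finset.sum_congr rfl fun q _ => by rw [Matrix.transpose_apply]
    rw [h1, hGinvT, hGinv, Matrix.one_apply]
  have gram : ∀ p q, pullbackFormZ ω M (w p) (w q) = ω a b * Jb r p q := by
    rintro ⟨i, bi⟩ ⟨j, bj⟩
    rw [pull_expand]
    simp_rw [← hGapp]
    cases bi <;> cases bj
    · -- (false, false)
      have hJ : Jb r ((i : Fin r), false) ((j : Fin r), false) = 0 := by simp [Jb]
      rw [hJ, mul_zero]
      refine Finset.sum_eq_zero fun j₁ _ => Finset.sum_eq_zero fun j₂ _ => ?_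
      simp only [hwdef, if_neg Bool.false_ne_true, Pi.single_apply]
      by_cases h1 : j₁ = i <;> by_cases h2 : j₂ = j <;>
        simp [h1, h2, halt a]
    · -- (false, true)
      rw [Finset.sum_eq_single i]
      · have hs : ∀ j₂, G i j₂ * ω (w (i, false) i) (w (j, true) j₂)
            = G i j₂ * (G⁻¹ j j₂ * ω a b) := by
          intro j₂
          simp [hwdef, Pi.single_eq_same, _root_.map_smul, smul_eq_mul]
        rw [Finset.sum_congr rfl fun j₂ _ => hs j₂]
        have hms : ∑ j₂, G i j₂ * (G⁻¹ j j₂ * ω a b)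
            = (∑ j₂, G i j₂ * G⁻¹ j j₂) * ω a b := by
          rw [Finset.sum_mul]
          exact Finset.sum_congr rfl fun q _ => by ring
        rw [hms, hsum1 i j]
        by_cases h : i = j <;> simp [Jb, h]
      · intro j₁ _ hne
        refine Finset.sum_eq_zero fun j₂ _ => ?_
        simp [hwdef, Pi.single_eq_of_ne hne]
      · simp
    · -- (true, false)
      have hin : ∀ j₁, (∑ j₂, G j₁ j₂ * ω (w (i, true) j₁) (w (j, false) j₂))
          = G j₁ j * (G⁻¹ i j₁ * ω b a) := by
        intro j₁
        rw [Finset.sum_eq_single j]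
        · simp [hwdef, Pi.single_eq_same, _root_.map_smul, LinearMap.smul_apply, smul_eq_mul]
        · intro j₂ _ hne
          simp [hwdef, Pi.single_eq_of_ne hne]
        · simp
      rw [Finset.sum_congr rfl fun j₁ _ => hin j₁]
      have hms : ∑ j₁, G j₁ j * (G⁻¹ i j₁ * ω b a)
          = (∑ j₁, G⁻¹ i j₁ * G j₁ j) * ω b a := by
        rw [Finset.sum_mul]
        exact Finset.sum_congr rfl fun q _ => by ring
      rw [hms, show (∑ j₁, G⁻¹ i j₁ * G j₁ j) = (G⁻¹ * G) i j from (Matrix.mul_apply).symm,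
        hGinv', Matrix.one_apply, hba]
      by_cases h : i = j <;> simp [Jb, h] <;> try ring
    · -- (true, true)
      have hJ : Jb r ((i : Fin r), true) ((j : Fin r), true) = 0 := by simp [Jb]
      rw [hJ, mul_zero]
      refine Finset.sum_eq_zero fun j₁ _ => Finset.sum_eq_zero fun j₂ _ => ?_
      simp [hwdef, _root_.map_smul, LinearMap.smul_apply, smul_eq_mul, halt b]
  constructor
  · refine ⟨w ∘ (pairEquiv r).symm, ?_⟩
    rw [wedgePow_transport]
    have hterm : ∀ π : Equiv.Perm (Fin r × Bool),
        ((Equiv.Perm.sign π : ℤ) : ℂ) *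
          ∏ i : Fin r, pullbackFormZ ω M (w (π (i, false))) (w (π (i, true)))
        = (ω a b) ^ r * (((Equiv.Perm.sign π : ℤ) : ℂ) *
            ∏ i : Fin r, Jb r (π (i, false)) (π (i, true))) := by
      intro π
      rw [Finset.prod_congr rfl fun i _ => gram (π (i, false)) (π (i, true))]
      rw [Finset.prod_mul_distrib, Finset.prod_const, Finset.card_univ, Fintype.card_fin]
      ring
    rw [Finset.sum_congr rfl fun π _ => hterm π, ← Finset.mul_sum]
    exact mul_ne_zero (pow_ne_zero r hc) (key_sum_ne r)
  · intro h2 x hx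
    have hnd : ∀ z : V, (∀ v : V, ω z v = 0) → z = 0 := by
      intro z hzv
      have hli : LinearIndependent ℂ ![a, b] := by
        rw [LinearIndependent.pair_iff]
        intro s t hst
        have e1 : ω (s • a + t • b) b = s * ω a b := by
          simp [_root_.map_smul, map_add, LinearMap.add_apply, LinearMap.smul_apply,
            smul_eq_mul, halt b]
        have e2 : ω (s • a + t • b) a = -(t * ω a b) := by
          simp [_root_.map_smul, map_add, LinearMap.add_apply, LinearMap.smul_apply,
            smul_eq_mul, halt a, hba]
          try ring
        rw [hst] at e1 e2
        simp only [map_zero, LinearMap.zero_apply] at e1 e2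
        constructor
        · rcases mul_eq_zero.mp e1.symm with h | h
          · exact h
          · exact absurd h hc
        · have : t * ω a b = 0 := by linear_combination e2
          rcases mul_eq_zero.mp this with h | h
          · exact h
          · exact absurd h hc
      have hcard : Fintype.card (Fin 2) = Module.finrank ℂ V := by simp [h2]
      have hspan : Submodule.span ℂ (Set.range ![a, b]) = ⊤ :=
        hli.span_eq_top_of_card_eq_finrank hcard
      have hrange : Set.range ![a, b] = {a, b} := by
        ext v
        constructor
        · rintro ⟨i, rfl⟩
          fin_cases i <;> simp
        · rintro (rfl | rfl)
          · exact ⟨0, rfl⟩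
          · exact ⟨1, rfl⟩
      have hz2 : z ∈ Submodule.span ℂ ({a, b} : Set V) := by
        rw [← hrange, hspan]; trivial
      obtain ⟨s, t, hst⟩ := Submodule.mem_span_pair.mp hz2
      have e1 : ω z b = s * ω a b := by
        rw [← hst]
        simp [_root_.map_smul, map_add, LinearMap.add_apply, LinearMap.smul_apply,
          smul_eq_mul, halt b]
      have e2 : ω z a = -(t * ω a b) := by
        rw [← hst]
        simp [_root_.map_smul, map_add, LinearMap.add_apply, LinearMap.smul_apply,
          smul_eq_mul, halt a, hba]
        try ring
      rw [hzv b] at e1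
      rw [hzv a] at e2
      have hs : s = 0 := by
        rcases mul_eq_zero.mp e1.symm with h | h
        · exact h
        · exact absurd h hc
      have ht : t = 0 := by
        have : t * ω a b = 0 := by linear_combination e2
        rcases mul_eq_zero.mp this with h | h
        · exact h
        · exact absurd h hc
      rw [← hst, hs, ht]
      simp
    have hz : ∀ q : Fin r, (∑ j, G j q • x j) = 0 := by
      intro q
      apply hnd
      intro v
      have h1 := hx (Pi.single q v)
      rw [pull_expand] at h1
      simp_rw [← hGapp] at h1
      have h3 : ∀ j : Fin r, (∑ j', G j j' * ω (x j) ((Pi.single q v : Fin r → V) j'))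
          = G j q * ω (x j) v := by
        intro j
        rw [Finset.sum_eq_single q]
        · rw [Pi.single_eq_same]
        · intro j' _ hne
          rw [Pi.single_eq_of_ne hne]
          simp
        · simp
      rw [Finset.sum_congr rfl fun j _ => h3 j] at h1
      calc ω (∑ j, G j q • x j) v = ∑ j, G j q * ω (x j) v := by
            simp [map_sum, _root_.map_smul, LinearMap.sum_apply, LinearMap.smul_apply,
              smul_eq_mul]
        _ = 0 := h1
    funext p
    have hxp : (∑ q : Fin r, G⁻¹ q p • (∑ j, G j q • x j)) = x p := by
      calc (∑ q : Fin r, G⁻¹ q p • (∑ j, G j q • x j))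
          = ∑ j : Fin r, (∑ q : Fin r, G j q * G⁻¹ q p) • x j := by
            simp only [Finset.smul_sum, smul_smul]
            rw [Finset.sum_comm]
            refine Finset.sum_congr rfl fun j _ => ?_
            rw [← Finset.sum_smul]
            congr 1
            exact Finset.sum_congr rfl fun q _ => mul_comm _ _
        _ = ∑ j : Fin r, ((1 : Matrix (Fin r) (Fin r) ℂ) j p) • x j := by
            refine Finset.sum_congr rfl fun j _ => ?_
            rw [← Matrix.mul_apply, hGinv]
        _ = x p := by simp [Matrix.one_apply]
    have hfin : x p = 0 := by
      rw [← hxp]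
      exact Finset.sum_eq_zero fun q _ => by rw [hz q, smul_zero]
    simpa using hfin
end

section
/- Let U be a complex vector space of dimension 2n equipped with a nondegenerate alternating bilinear form ω, and let l ≥ 1 be an integer. If W ⊆ U is a linear subspace such that ω^{∧l} vanishes identically on W (i.e. ω^{∧l}(w_1,…,w_{2l}) = 0 for all w_1,…,w_{2l} ∈ W), then dim W ≤ n + l − 1. -/
open scoped BigOperators

/-!
Isotropic subspaces of a `2n`-dimensional symplectic space have dimension at most `n`, so if
`dim W ≥ n + l` then every isotropic `S ≤ W` satisfies `dim S + l ≤ dim W`. Under this bound `W`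
contains a non-orthogonal pair `(e, f)`, and `W' = W ∩ {e, f}^⊥` satisfies the bound with `l - 1`:
for isotropic `S ≤ W'`, `S + K e` is isotropic in `W`, while `W'` has codimension at most two.
By induction `W` contains `e₁, f₁, …, e_l, f_l` whose Gram matrix is the standard symplectic one.
On these vectors `ω^{∧l}` does not vanish: a permutation contributes only if it permutes the
pairs `{e_i, f_i}`, and then its sign equals the product of the values of `ω`, so every
contribution is `0` or `1`, and the identity contributes `1`.
-/

open Equiv Equiv.Perm Matrix Module

/-- Indexing: `(0, i)` stands for `e_i` and `(1, i)` for `f_i`. -/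
def symplecticGram (R : Type*) [Ring R] (l : ℕ) : Matrix (Fin 2 × Fin l) (Fin 2 × Fin l) R :=
  blockDiagonal fun _ => !![0, 1; -1, 0]

def finTwoProdEquiv (l : ℕ) : Fin 2 × Fin l ≃ Fin (2 * l) :=
  (prodComm _ _).trans (finProdFinEquiv.trans (finCongr (Nat.mul_comm l 2)))

@[simp]
lemma finTwoProdEquiv_apply_val {l : ℕ} (p : Fin 2 × Fin l) :
    (finTwoProdEquiv l p : ℕ) = 2 * p.2 + p.1 := by
  simp [finTwoProdEquiv, add_comm]

def IsIsotropic {K U : Type*} [Field K] [AddCommGroup U] [Module K U]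
    (ω : U →ₗ[K] U →ₗ[K] K) (S : Submodule K U) : Prop :=
  ∀ x ∈ S, ∀ y ∈ S, ω x y = 0

section WedgePow

variable {T : Type*} {l : ℕ}

lemma wedgePow_comp_finTwoProdEquiv_symm (β : T → T → ℂ) (u : Fin 2 × Fin l → T) :
    wedgePow β l (u ∘ (finTwoProdEquiv l).symm) =
      ∑ σ : Perm (Fin 2 × Fin l), ((sign σ : ℤ) : ℂ) * ∏ i, β (u (σ (0, i))) (u (σ (1, i))) := by
  rw [wedgePow, ← ((finTwoProdEquiv l).permCongr).sum_comp]
  refine Fintype.sum_congr _ _ fun σ => ?_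
  have hpos (a : Fin 2) (i : Fin l) (h) : (finTwoProdEquiv l).symm ⟨2 * i + a, h⟩ = (a, i) := by
    rw [Equiv.symm_apply_eq]; ext; simp
  simp only [sign_permCongr, Function.comp_apply, permCongr_apply, symm_apply_apply]
  congr 1
  refine Fintype.prod_congr _ _ fun i => ?_
  rw [← hpos 0 i, ← hpos 1 i]
  rfl

lemma symplecticGram_apply_perm {R : Type*} [Ring R] (f : Perm (Fin 2)) (i : Fin l) :
    symplecticGram R l (f 0, i) (f 1, i) = (sign f : ℤ) := by
  obtain rfl | rfl : f = 1 ∨ f = swap 0 1 := by revert f; decide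
  all_goals simp [symplecticGram, blockDiagonal_apply]

lemma symplecticGram_ne_zero {R : Type*} [Ring R] {p q : Fin 2 × Fin l}
    (h : symplecticGram R l p q ≠ 0) : p.1 ≠ q.1 ∧ p.2 = q.2 := by
  obtain ⟨a, i⟩ := p
  obtain ⟨b, j⟩ := q
  simp only [symplecticGram, blockDiagonal_apply] at h
  split_ifs at h with hij
  · exact ⟨by rintro rfl; fin_cases a <;> simp at h, hij⟩
  · exact absurd rfl h

def blockPerm (τ : Perm (Fin l)) (f : Fin l → Perm (Fin 2)) : Perm (Fin 2 × Fin l) :=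
  prodCongrRight (fun _ => τ) * prodCongrLeft f

lemma sign_mul_prod_symplecticGram_blockPerm (τ : Perm (Fin l)) (f : Fin l → Perm (Fin 2)) :
    ((sign (blockPerm τ f) : ℤ) : ℂ) *
      ∏ i, symplecticGram ℂ l (blockPerm τ f (0, i)) (blockPerm τ f (1, i)) = 1 := by
  have hsign : sign (blockPerm τ f) = ∏ i, sign (f i) := by
    simp [blockPerm, sign_prodCongrRight, sign_prodCongrLeft]
  rw [hsign]
  simp only [blockPerm, Perm.mul_apply, prodCongrLeft_apply, prodCongrRight_apply,
    symplecticGram_apply_perm]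
  push_cast
  rw [← Finset.prod_mul_distrib]
  exact Finset.prod_eq_one fun i _ => by norm_cast; simp [Int.units_mul_self]

lemma exists_eq_blockPerm {σ : Perm (Fin 2 × Fin l)}
    (h : ∀ i, symplecticGram ℂ l (σ (0, i)) (σ (1, i)) ≠ 0) :
    ∃ τ f, σ = blockPerm τ f := by
  choose hne hsnd using fun i => symplecticGram_ne_zero (h i)
  have hfst (i : Fin l) : Function.Injective fun a => (σ (a, i)).1 := by
    intro a b hab
    fin_cases a <;> fin_cases b <;> simp_all [eq_comm]
  have hτ : Function.Injective fun i => (σ (0, i)).2 := by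
    intro i j hij
    obtain ⟨a, ha⟩ : ∃ a, σ (0, j) = σ (a, i) := by
      obtain h0 | h1 : (σ (0, j)).1 = (σ (0, i)).1 ∨ (σ (0, j)).1 = (σ (1, i)).1 := by
        have := hne i
        omega
      · exact ⟨0, Prod.ext h0 hij.symm⟩
      · exact ⟨1, Prod.ext h1 (hij.symm.trans (hsnd i))⟩
    exact (congrArg Prod.snd (σ.injective ha)).symm
  refine ⟨ofBijective _ (Finite.injective_iff_bijective.mp hτ),
    fun i => ofBijective _ (Finite.injective_iff_bijective.mp (hfst i)), ?_⟩
  refine Equiv.ext fun ⟨a, i⟩ => Prod.ext rfl ?_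
  obtain rfl | rfl : a = 0 ∨ a = 1 := by omega
  · rfl
  · exact (hsnd i).symm

lemma sign_mul_prod_symplecticGram_eq_zero_or_one (σ : Perm (Fin 2 × Fin l)) :
    ((sign σ : ℤ) : ℂ) * ∏ i, symplecticGram ℂ l (σ (0, i)) (σ (1, i)) = 0 ∨
      ((sign σ : ℤ) : ℂ) * ∏ i, symplecticGram ℂ l (σ (0, i)) (σ (1, i)) = 1 := by
  by_cases h : ∃ i, symplecticGram ℂ l (σ (0, i)) (σ (1, i)) = 0
  · obtain ⟨i, hi⟩ := h
    exact Or.inl (by rw [Finset.prod_eq_zero (Finset.mem_univ i) hi, mul_zero])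
  · obtain ⟨τ, f, rfl⟩ := exists_eq_blockPerm (not_exists.mp h)
    exact Or.inr (sign_mul_prod_symplecticGram_blockPerm τ f)

open scoped ComplexOrder in
lemma wedgePow_ne_zero_of_symplecticGram (β : T → T → ℂ) (u : Fin 2 × Fin l → T)
    (hu : ∀ p q, β (u p) (u q) = symplecticGram ℂ l p q) :
    wedgePow β l (u ∘ (finTwoProdEquiv l).symm) ≠ 0 := by
  simp only [wedgePow_comp_finTwoProdEquiv_symm, hu]
  intro hsum
  have hnonneg (σ : Perm (Fin 2 × Fin l)) :
      0 ≤ ((sign σ : ℤ) : ℂ) * ∏ i, symplecticGram ℂ l (σ (0, i)) (σ (1, i)) := by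
    rcases sign_mul_prod_symplecticGram_eq_zero_or_one σ with h | h <;> rw [h]; exact zero_le_one
  have hid := (Finset.sum_eq_zero_iff_of_nonneg fun σ _ => hnonneg σ).mp hsum 1
    (Finset.mem_univ _)
  simp [symplecticGram, blockDiagonal_apply] at hid

end WedgePow

section Isotropic

variable {K U : Type*} [Field K] [AddCommGroup U] [Module K U]

lemma IsIsotropic.sup_span_singleton {ω : U →ₗ[K] U →ₗ[K] K} (halt : ω.IsAlt)
    {S : Submodule K U} (hS : IsIsotropic ω S) {e : U} (he : ∀ s ∈ S, ω e s = 0) :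
    IsIsotropic ω (S ⊔ K ∙ e) := by
  intro x hx y hy
  obtain ⟨s, hs, _, ht, rfl⟩ := Submodule.mem_sup.mp hx
  obtain ⟨s', hs', _, ht', rfl⟩ := Submodule.mem_sup.mp hy
  obtain ⟨a, rfl⟩ := Submodule.mem_span_singleton.mp ht
  obtain ⟨b, rfl⟩ := Submodule.mem_span_singleton.mp ht'
  simp [hS s hs s' hs', he s' hs', ← halt.neg e s, he s hs, halt e]

variable [FiniteDimensional K U]

lemma IsIsotropic.two_mul_finrank_le {ω : U →ₗ[K] U →ₗ[K] K} (halt : ω.IsAlt)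
    (hnd : ω.SeparatingLeft) {S : Submodule K U} (hS : IsIsotropic ω S) :
    2 * finrank K S ≤ finrank K U := by
  have hS_le : S ≤ LinearMap.BilinForm.orthogonal ω S := fun x hx y hy => hS y hy x hx
  have := LinearMap.BilinForm.finrank_orthogonal
    (halt.isRefl.nondegenerate_iff_separatingLeft.mpr hnd) S
  have := Submodule.finrank_mono hS_le
  have := Submodule.finrank_le S
  omega

lemma finrank_le_finrank_inf_ker_add_one (W : Submodule K U) (g : U →ₗ[K] K) :
    finrank K W ≤ finrank K (W ⊓ LinearMap.ker g : Submodule K U) + 1 := by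
  have := Submodule.finrank_sup_add_finrank_inf_eq W (LinearMap.ker g)
  have := LinearMap.finrank_range_add_finrank_ker g
  have := (Submodule.finrank_le (LinearMap.range g)).trans (finrank_self K).le
  have := Submodule.finrank_le (W ⊔ LinearMap.ker g)
  omega

lemma exists_symplecticGram_family {ω : U →ₗ[K] U →ₗ[K] K} (halt : ω.IsAlt) {l : ℕ}
    {W : Submodule K U} (hW : ∀ S ≤ W, IsIsotropic ω S → finrank K S + l ≤ finrank K W) :
    ∃ u : Fin 2 × Fin l → U, (∀ p, u p ∈ W) ∧ ∀ p q, ω (u p) (u q) = symplecticGram K l p q := by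
  induction l generalizing W with
  | zero => exact ⟨fun p => p.2.elim0, fun p => p.2.elim0, fun p => p.2.elim0⟩
  | succ l ih =>
    obtain ⟨e, heW, y, hyW, hey⟩ : ∃ e ∈ W, ∃ y ∈ W, ω e y ≠ 0 := by
      by_contra! h
      have := hW W le_rfl h
      omega
    set f := (ω e y)⁻¹ • y
    have hef : ω e f = 1 := by simp [f, hey]
    have hW' : ∀ S ≤ W ⊓ LinearMap.ker (ω e) ⊓ LinearMap.ker (ω f), IsIsotropic ω S →
        finrank K S + l ≤ finrank K ↥(W ⊓ LinearMap.ker (ω e) ⊓ LinearMap.ker (ω f)) := by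
      intro S hSW' hS
      have he : e ∉ S := fun heS => by
        simpa [← halt.neg e f, hef] using (Submodule.mem_inf.mp (hSW' heS)).2
      have hSe := hW (S ⊔ K ∙ e)
        (sup_le (hSW'.trans (inf_le_left.trans inf_le_left))
          (Submodule.span_singleton_le_iff_mem _ _ |>.mpr heW))
        (hS.sup_span_singleton halt fun s hs => (hSW' hs).1.2)
      rw [Submodule.finrank_sup_span_singleton he] at hSe
      have := finrank_le_finrank_inf_ker_add_one W (ω e)
      have := finrank_le_finrank_inf_ker_add_one (W ⊓ LinearMap.ker (ω e)) (ω f)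
      omega
    obtain ⟨u, huW', hu⟩ := ih hW'
    have horth (a : Fin 2) (p : Fin 2 × Fin l) : ω (![e, f] a) (u p) = 0 := by
      have hup := huW' p
      fin_cases a
      · exact hup.1.2
      · exact hup.2
    refine ⟨fun p => vecCons (![e, f] p.1) (fun i => u (p.1, i)) p.2, ?_, ?_⟩
    · rintro ⟨a, i⟩
      cases i using Fin.cases with
      | zero =>
        fin_cases a
        · exact heW
        · exact W.smul_mem _ hyW
      | succ i => exact (huW' (a, i)).1.1
    · rintro ⟨a, i⟩ ⟨b, j⟩
      cases i using Fin.cases <;> cases j using Fin.cases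
      · fin_cases a <;> fin_cases b <;>
          simp [symplecticGram, blockDiagonal_apply, halt e, halt f, hef, ← halt.neg e f]
      · simpa [symplecticGram, blockDiagonal_apply, (Fin.succ_ne_zero _).symm] using horth a _
      · simp only [cons_val_zero, cons_val_succ]
        rw [← halt.neg, horth, neg_zero]
        simp [symplecticGram, blockDiagonal_apply, Fin.succ_ne_zero]
      · simpa [symplecticGram, blockDiagonal_apply] using hu _ _

end Isotropic

theorem finrank_le_of_wedgePow_vanishes_symplectic_general
    (U : Type*) [AddCommGroup U] [Module ℂ U] [FiniteDimensional ℂ U]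
    (n : ℕ) (hU : Module.finrank ℂ U = 2 * n)
    (ω : U →ₗ[ℂ] U →ₗ[ℂ] ℂ) (halt : ω.IsAlt)
    (hnd : ∀ u : U, (∀ v : U, ω u v = 0) → u = 0)
    (l : ℕ)
    (W : Submodule ℂ U)
    (hvan : ∀ w : Fin (2 * l) → U, (∀ i, w i ∈ W) →
      wedgePow (fun x y => ω x y) l w = 0) :
    Module.finrank ℂ W ≤ n + l - 1 := by
  by_contra! hlt
  have hW (S : Submodule ℂ U) (_ : S ≤ W) (hS : IsIsotropic ω S) :
      finrank ℂ S + l ≤ finrank ℂ W := by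
    have := hS.two_mul_finrank_le halt hnd
    omega
  obtain ⟨u, huW, hu⟩ := exists_symplecticGram_family halt hW
  exact wedgePow_ne_zero_of_symplecticGram (fun x y => ω x y) u hu (hvan _ fun _ => huW _)

/-- `U` a complex vector space of dimension `2n` with a nondegenerate
alternating bilinear form `ω`, `l ≥ 1`.  If `W ⊆ U` is a linear subspace on which
`ω^{∧l}` vanishes identically, then `dim W ≤ n + l − 1`. -/
theorem finrank_le_of_wedgePow_vanishes_symplectic
    (U : Type*) [AddCommGroup U] [Module ℂ U] [FiniteDimensional ℂ U]
    (n : ℕ) (hU : Module.finrank ℂ U = 2 * n)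
    (ω : U →ₗ[ℂ] U →ₗ[ℂ] ℂ) (halt : ω.IsAlt)
    (hnd : ∀ u : U, (∀ v : U, ω u v = 0) → u = 0)
    (l : ℕ) (hl : 1 ≤ l)
    (W : Submodule ℂ U)
    (hvan : ∀ w : Fin (2 * l) → U, (∀ i, w i ∈ W) →
      wedgePow (fun x y => ω x y) l w = 0) :
    Module.finrank ℂ W ≤ n + l - 1 :=
  finrank_le_of_wedgePow_vanishes_symplectic_general U n hU ω halt hnd l W hvan
end

section
/- Let V be a complex vector space of finite dimension g ≥ 1, let r ≥ 1 be an integer, and let W ⊆ V^r be a linear subspace with dim W = g. Suppose that for every one-dimensional subspace L ⊆ V, the restriction to W of the quotient map π_L : V^r → (V/L)^r (the r-fold product of the canonical projection V → V/L) is not injective. Then there exists a vector (m_1,…,m_r) ∈ ℂ^r such that W = { (m_1 v, m_2 v, …, m_r v) : v ∈ V }. -/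
open Module

/-!
Write `m ⊗ v` for `(mᵢ • v)ᵢ`. Non-injectivity of the projection for the line `K ∙ v` means
that `W` contains a nonzero `m ⊗ v`. Doing this for a basis `b` gives `g` independent vectors
`mₖ ⊗ bₖ`, hence a basis of `W`; doing it once more for `v = ∑ₖ bₖ` and expanding `m ⊗ v` in that
basis shows that every `mₖ` is a multiple of `m`, so `W ≤ m ⊗ V`, and equality follows by
counting dimensions.
-/

section ScaledDiagonal

variable {K V ι : Type*} [Field K] [AddCommGroup V] [Module K V]

/-- Its range is the subspace `V_M` of the paper, for `M = m`. -/
def scaledDiagonal (m : ι → K) : V →ₗ[K] ι → V :=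
  LinearMap.pi fun i => m i • LinearMap.id

@[simp]
theorem scaledDiagonal_apply (m : ι → K) (v : V) : scaledDiagonal m v = fun i => m i • v :=
  rfl

theorem scaledDiagonal_smul (a : K) (m : ι → K) (v : V) :
    scaledDiagonal (a • m) v = scaledDiagonal m (a • v) := by
  ext i
  simp only [scaledDiagonal_apply, Pi.smul_apply, smul_eq_mul, mul_smul, smul_comm a]

theorem scaledDiagonal_injective {m : ι → K} (hm : m ≠ 0) :
    Function.Injective (scaledDiagonal (V := V) m) := by
  obtain ⟨i, hi⟩ := Function.ne_iff.mp hm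
  rw [injective_iff_map_eq_zero]
  intro v hv
  exact (smul_eq_zero.mp (congrFun hv i)).resolve_left hi

theorem exists_scaledDiagonal_mem_of_not_injective {W : Submodule K (ι → V)} {v : V}
    (h : ¬ Function.Injective (fun w : W =>
      (LinearMap.pi fun i => (K ∙ v).mkQ.comp (LinearMap.proj i)) (w : ι → V))) :
    ∃ m : ι → K, m ≠ 0 ∧ scaledDiagonal m v ∈ W := by
  obtain ⟨a, b, hab, hne⟩ := Function.not_injective_iff.mp h
  have hmem : ∀ i, (a : ι → V) i - (b : ι → V) i ∈ K ∙ v := fun i =>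
    (Submodule.Quotient.eq _).mp (congrFun hab i)
  choose m hm using fun i => Submodule.mem_span_singleton.mp (hmem i)
  have hdiag : scaledDiagonal m v = (a : ι → V) - b := funext hm
  refine ⟨m, ?_, hdiag ▸ W.sub_mem a.2 b.2⟩
  rintro rfl
  exact hne (Subtype.ext (sub_eq_zero.mp (hdiag.symm.trans (by ext; simp))))

variable {κ : Type*}

theorem linearIndependent_scaledDiagonal {b : κ → V} (hb : LinearIndependent K b)
    {m : κ → ι → K} (hm : ∀ k, m k ≠ 0) :
    LinearIndependent K fun k => scaledDiagonal (m k) (b k) := by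
  rw [linearIndependent_iff']
  intro s c hc k hk
  obtain ⟨i, hi⟩ := Function.ne_iff.mp (hm k)
  have hci : ∑ l ∈ s, (c l * m l i) • b l = 0 := by
    simpa only [Finset.sum_apply, Pi.smul_apply, scaledDiagonal_apply, mul_smul, Pi.zero_apply]
      using congrFun hc i
  exact (mul_eq_zero.mp (linearIndependent_iff'.mp hb s _ hci k hk)).resolve_right hi

theorem eq_smul_of_scaledDiagonal_sum_eq [Fintype κ] {b : κ → V} (hb : LinearIndependent K b)
    {m : ι → K} {n : κ → ι → K} {c : κ → K}
    (h : scaledDiagonal m (∑ k, b k) = ∑ k, c k • scaledDiagonal (n k) (b k)) (k : κ) :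
    m = c k • n k := by
  ext i
  have hi : ∑ l, m i • b l = ∑ l, (c l * n l i) • b l := by
    simpa only [Finset.smul_sum, Finset.sum_apply, Pi.smul_apply, scaledDiagonal_apply,
      mul_smul] using congrFun h i
  exact Fintype.linearIndependent_iffₛ.mp hb _ _ hi k

theorem eq_range_scaledDiagonal_of_forall_exists_mem [Finite ι] [FiniteDimensional K V]
    {W : Submodule K (ι → V)} (hW : finrank K W = finrank K V)
    (h : ∀ v : V, v ≠ 0 → ∃ m : ι → K, m ≠ 0 ∧ scaledDiagonal m v ∈ W) :
    ∃ m : ι → K, W = LinearMap.range (scaledDiagonal m) := by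
  cases subsingleton_or_nontrivial V
  · exact ⟨0, Subsingleton.elim _ _⟩
  let b := finBasis K V
  have : Nonempty (Fin (finrank K V)) := b.index_nonempty
  choose n hn hnW using fun k => h (b k) (b.ne_zero k)
  have hsum : ∑ k, b k ≠ 0 := fun h0 =>
    one_ne_zero (Fintype.linearIndependent_iff.mp b.linearIndependent 1 (by simpa using h0)
      (Classical.arbitrary _))
  obtain ⟨m, hm, hmW⟩ := h _ hsum
  have hspan : W = Submodule.span K (Set.range fun k => scaledDiagonal (n k) (b k)) := by
    refine (Submodule.eq_of_le_of_finrank_le (Submodule.span_le.mpr ?_) ?_).symm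
    · rintro _ ⟨k, rfl⟩
      exact hnW k
    · rw [finrank_span_eq_card (linearIndependent_scaledDiagonal b.linearIndependent hn),
        Fintype.card_fin, hW]
  obtain ⟨c, hc⟩ := (Submodule.mem_span_range_iff_exists_fun K).mp (hspan ▸ hmW)
  have hmc := eq_smul_of_scaledDiagonal_sum_eq b.linearIndependent hc.symm
  refine ⟨m, Submodule.eq_of_le_of_finrank_le ?_ ?_⟩
  · rw [hspan, Submodule.span_le]
    rintro _ ⟨k, rfl⟩
    have hck : c k ≠ 0 := by
      rintro hck
      exact hm (by rw [hmc k, hck, zero_smul])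
    refine ⟨(c k)⁻¹ • b k, ?_⟩
    rw [← scaledDiagonal_smul, hmc k, smul_smul, inv_mul_cancel₀ hck, one_smul]
  · rw [LinearMap.finrank_range_of_inj (scaledDiagonal_injective hm), hW]

end ScaledDiagonal

theorem subspace_eq_diagonal_of_no_injective_projection_general
    (V : Type*) [AddCommGroup V] [Module ℂ V] [FiniteDimensional ℂ V]
    (g r : ℕ)
    (hV : Module.finrank ℂ V = g)
    (W : Submodule ℂ (Fin r → V)) (hW : Module.finrank ℂ W = g)
    (hproj : ∀ L : Submodule ℂ V, Module.finrank ℂ L = 1 →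
      ¬ Function.Injective (fun w : W =>
        (LinearMap.pi fun i : Fin r => L.mkQ.comp (LinearMap.proj i)) (w : Fin r → V))) :
    ∃ m : Fin r → ℂ,
      W = LinearMap.range (LinearMap.pi fun j : Fin r => m j • (LinearMap.id : V →ₗ[ℂ] V)) :=
  eq_range_scaledDiagonal_of_forall_exists_mem (hW.trans hV.symm) fun _ hv =>
    exists_scaledDiagonal_mem_of_not_injective (hproj _ (finrank_span_singleton hv))

/-- Let `V` be a `g`-dimensional complex vector space (`g ≥ 1`), `r ≥ 1`, and
`W ⊆ V^r` a `g`-dimensional linear subspace.  If for every one-dimensional subspace `L ⊆ V`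
the restriction to `W` of the `r`-fold product projection `π_L : V^r → (V/L)^r` is not
injective, then `W = V_M = {(m_1 v, …, m_r v) : v ∈ V}` for some `(m_1,…,m_r) ∈ ℂ^r`. -/
theorem subspace_eq_diagonal_of_no_injective_projection
    (V : Type*) [AddCommGroup V] [Module ℂ V] [FiniteDimensional ℂ V]
    (g r : ℕ) (hg : 1 ≤ g) (hr : 1 ≤ r)
    (hV : Module.finrank ℂ V = g)
    (W : Submodule ℂ (Fin r → V)) (hW : Module.finrank ℂ W = g)
    (hproj : ∀ L : Submodule ℂ V, Module.finrank ℂ L = 1 →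
      ¬ Function.Injective (fun w : W =>
        (LinearMap.pi fun i : Fin r => L.mkQ.comp (LinearMap.proj i)) (w : Fin r → V))) :
    ∃ m : Fin r → ℂ,
      W = LinearMap.range (LinearMap.pi fun j : Fin r => m j • (LinearMap.id : V →ₗ[ℂ] V)) :=
  subspace_eq_diagonal_of_no_injective_projection_general V g r hV W hW hproj
end
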